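/- arXiv:1810.06488 — 7 statements merged into one kernel-verified Lean document; each statement's English description precedes it below -/
import Mathlib

section
/- For each nonnegative integer α, the three higher-order differential expressions annihilate the exponential function: 𝓛̆_{2α+4}[e^x] = 0, 𝓛̃_{2α+8}[e^x] = 0 and 𝓛̂_{4α+10}[e^x] = 0 identically for all x > 0. -/
open Real MeasureTheory Finset

noncomputable section

/-- Pochhammer symbol `(a)_m = a (a+1) ⋯ (a+m-1)`. -/
def poch (a : ℝ) (m : ℕ) : ℝ := (ascPochhammer ℝ m).eval a

/-- Generalized Laguerre polynomial `L_n^a(x)`. -/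
def lag (a : ℝ) (n : ℕ) (x : ℝ) : ℝ :=
  ∑ k ∈ Finset.range (n + 1),
    ((-1 : ℝ) ^ k / (Nat.factorial k : ℝ)) *
      (poch (a + (k : ℝ) + 1) (n - k) / (Nat.factorial (n - k) : ℝ)) * x ^ k

/-- The component `T_n^a(x)` of the Sobolev-Laguerre polynomials. -/
def Tpoly (a : ℝ) (n : ℕ) (x : ℝ) : ℝ :=
  if n = 0 then 0 else
    -(poch (a + 2) (n - 1) / (Nat.factorial n : ℝ)) * x * lag (a + 2) (n - 1) x

/-- The component `U_n^a(x)` of the Sobolev-Laguerre polynomials. -/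
def Upoly (a : ℝ) (n : ℕ) (x : ℝ) : ℝ :=
  if n < 2 then 0 else
    (poch (a + 3) (n - 2) / ((a + 1) * (a + 3) * (Nat.factorial (n - 2) : ℝ))) *
      (x ^ 2 / ((n : ℝ) - 1) * lag (a + 4) (n - 2) x
        - (a + 2) * x * lag (a + 2) (n - 1) x
        - ((n : ℝ) + a + 1) * lag a n x)

/-- The component `V_n^a(x)` of the Sobolev-Laguerre polynomials. -/
def Vpoly (a : ℝ) (n : ℕ) (x : ℝ) : ℝ :=
  if n < 2 then 0 else
    (1 / (a + 1)) * (poch (a + 3) (n - 2) / (Nat.factorial (n - 1) : ℝ)) *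
      (poch (a + 4) (n - 2) / (Nat.factorial n : ℝ)) * x ^ 2 * lag (a + 4) (n - 2) x

/-- The Sobolev-Laguerre polynomial `L_n^{α,M,N}(x)`. -/
def sobLag (α : ℕ) (M N : ℝ) (n : ℕ) (x : ℝ) : ℝ :=
  lag (α : ℝ) n x + M * Tpoly (α : ℝ) n x + N * Upoly (α : ℝ) n x
    + M * N * Vpoly (α : ℝ) n x

/-- The classical Laguerre differential expression `𝓛^α y`. -/
def Lcl (α : ℕ) (y : ℝ → ℝ) (x : ℝ) : ℝ :=
  x * iteratedDeriv 2 y x + ((α : ℝ) + 1 - x) * deriv y x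

/-- The Laguerre-type differential expression `𝓛̆_{2α+4} y` of order `2α+4`. -/
def Lbreve (α : ℕ) (y : ℝ → ℝ) (x : ℝ) : ℝ :=
  ((-1 : ℝ) ^ (α + 1) / (Nat.factorial (α + 2) : ℝ)) * Real.exp x * x *
    iteratedDeriv (α + 2) (fun t => Real.exp (-t) *
      iteratedDeriv (α + 2) (fun s => s ^ (α + 1) * y s) t) x

/-- The expression `E y`. -/
def Eop (α : ℕ) (y : ℝ → ℝ) (x : ℝ) : ℝ :=
  -((α : ℝ) + 2) * Real.exp x * x *
    iteratedDeriv (α + 4) (fun t => Real.exp (-t) * t ^ 2 *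
      iteratedDeriv (α + 4) (fun s => s ^ (α + 1) * y s) t) x

/-- The expression `F y`. -/
def Fop (α : ℕ) (y : ℝ → ℝ) (x : ℝ) : ℝ :=
  ((α : ℝ) + 4) * Real.exp x * x *
    iteratedDeriv (α + 3) (fun t => Real.exp (-t) * (t + 2 * (α : ℝ) + 4) *
      iteratedDeriv (α + 3) (fun s => s ^ (α + 1) * y s) t) x

/-- The expression `G y`. -/
def Gop (α : ℕ) (y : ℝ → ℝ) (x : ℝ) : ℝ :=
  ((α : ℝ) + 1) * ((α : ℝ) + 3) * ((α : ℝ) + 4) * Real.exp x *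
    iteratedDeriv (α + 2) (fun t => Real.exp (-t) * (t + 2 * (α : ℝ) + 4) *
      iteratedDeriv (α + 2) (fun s => s ^ α * y s) t) x

/-- The differential expression `𝓛̃_{2α+8} y` of order `2α+8`. -/
def Ltilde (α : ℕ) (y : ℝ → ℝ) (x : ℝ) : ℝ :=
  ((-1 : ℝ) ^ α / (((α : ℝ) + 1) * (Nat.factorial (α + 4) : ℝ))) *
    (Eop α y x + Fop α y x + Gop α y x)

/-- The constant `q_j = (α+2-j)(α+3+j)/(α+2)`. -/
def qcoef (α j : ℕ) : ℝ := ((α : ℝ) + 2 - (j : ℝ)) * ((α : ℝ) + 3 + (j : ℝ)) / ((α : ℝ) + 2)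

/-- The expression `H_j y`. -/
def Hop (α j : ℕ) (y : ℝ → ℝ) (x : ℝ) : ℝ :=
  ((-1 : ℝ) ^ (α + j) / (((α : ℝ) + 1) * (Nat.factorial (α + 3 + j) : ℝ))) *
    Real.exp x * x *
    iteratedDeriv (α + 3 + j) (fun t => Real.exp (-t) * t ^ j * (t + qcoef α j) *
      iteratedDeriv (α + 3 + j) (fun s => s ^ (α + 1) * y s) t) x

/-- The differential expression `𝓛̂_{4α+10} y` of order `4α+10`. -/
def Lhat (α : ℕ) (y : ℝ → ℝ) (x : ℝ) : ℝ :=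
  ∑ j ∈ Finset.range (α + 3),
    (poch ((α : ℝ) + 3 - (j : ℝ)) (2 * j) /
      ((Nat.factorial j : ℝ) * (Nat.factorial (j + 1) : ℝ))) * Hop α j y x

/-- The Sobolev-Laguerre differential operator `𝓛^{α,M,N}`. -/
def LsobOp (α : ℕ) (M N : ℝ) (y : ℝ → ℝ) (x : ℝ) : ℝ :=
  Lcl α y x + M * Lbreve α y x + N * Ltilde α y x + M * N * Lhat α y x

/-- The eigenvalue component `λ_n^{α,A}`. -/
def lamA (α n : ℕ) : ℝ := poch (n : ℝ) (α + 2) / (Nat.factorial (α + 2) : ℝ)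

/-- The eigenvalue component `λ_n^{α,B}`. -/
def lamB (α n : ℕ) : ℝ :=
  ((α : ℝ) + 2) / ((α : ℝ) + 1) * poch ((n : ℝ) - 2) (α + 4) / (Nat.factorial (α + 4) : ℝ)
    + 1 / ((α : ℝ) + 1) * poch ((n : ℝ) - 1) (α + 3) / (Nat.factorial (α + 3) : ℝ)

/-- The eigenvalue component `λ_n^{α,C}`. -/
def lamC (α n : ℕ) : ℝ :=
  (1 / ((α : ℝ) + 1)) * ∑ j ∈ Finset.range (α + 3),
    if (j : ℤ) ≤ (n : ℤ) - 2 then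
      (poch ((α : ℝ) + 3 - (j : ℝ)) (2 * j) /
        ((Nat.factorial j : ℝ) * (Nat.factorial (j + 1) : ℝ))) *
        poch ((n : ℝ) - 1 - (j : ℝ)) (j + α + 3) / (Nat.factorial (j + α + 3) : ℝ)
    else 0

/-- The combined eigenvalue `λ_n^{α,M,N}`. -/
def lamSob (α : ℕ) (M N : ℝ) (n : ℕ) : ℝ :=
  (n : ℝ) + M * lamA α n + N * lamB α n + M * N * lamC α n

/-- The Laguerre inner product `(f,g)_{w(α)}`. -/
def ipW (α : ℕ) (f g : ℝ → ℝ) : ℝ :=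
  (1 / (Nat.factorial α : ℝ)) *
    ∫ x in Set.Ioi (0 : ℝ), f x * g x * Real.exp (-x) * x ^ α

/-- The Sobolev-type inner product `(f,g)_{w(α,M,N)}`. -/
def ipSob (α : ℕ) (M N : ℝ) (f g : ℝ → ℝ) : ℝ :=
  ipW α f g + M * f 0 * g 0 + N * deriv f 0 * deriv g 0

/-- The integral `I₁^α(f,g)`. -/
def I1 (α : ℕ) (f g : ℝ → ℝ) : ℝ :=
  (1 / (Nat.factorial α : ℝ)) *
    ∫ x in Set.Ioi (0 : ℝ), Real.exp (-x) * x ^ (α + 1) * deriv f x * deriv g x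

/-- The integral `I₂^α(f,g)`. -/
def I2 (α : ℕ) (f g : ℝ → ℝ) : ℝ :=
  (1 / ((Nat.factorial α : ℝ) * (Nat.factorial (α + 2) : ℝ))) *
    ∫ x in Set.Ioi (0 : ℝ), Real.exp (-x) *
      iteratedDeriv (α + 2) (fun s => s ^ (α + 1) * f s) x *
      iteratedDeriv (α + 2) (fun s => s ^ (α + 1) * g s) x

/-- The integral `I₃,₁^α(f,g)`. -/
def I31 (α : ℕ) (f g : ℝ → ℝ) : ℝ :=
  (((α : ℝ) + 2) / ((Nat.factorial (α + 1) : ℝ) * (Nat.factorial (α + 4) : ℝ))) *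
    ∫ x in Set.Ioi (0 : ℝ), Real.exp (-x) * x ^ 2 *
      iteratedDeriv (α + 4) (fun s => s ^ (α + 1) * f s) x *
      iteratedDeriv (α + 4) (fun s => s ^ (α + 1) * g s) x

/-- The integral `I₃,₂^α(f,g)`. -/
def I32 (α : ℕ) (f g : ℝ → ℝ) : ℝ :=
  (1 / ((Nat.factorial (α + 1) : ℝ) * (Nat.factorial (α + 3) : ℝ))) *
    ∫ x in Set.Ioi (0 : ℝ), Real.exp (-x) * (x + 2 * (α : ℝ) + 4) *
      iteratedDeriv (α + 3) (fun s => s ^ (α + 1) * f s) x *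
      iteratedDeriv (α + 3) (fun s => s ^ (α + 1) * g s) x

/-- The integral `I₃,₃^α(f,g)`. -/
def I33 (α : ℕ) (f g : ℝ → ℝ) : ℝ :=
  (1 / ((Nat.factorial α : ℝ) * (Nat.factorial (α + 2) : ℝ))) *
    ∫ x in Set.Ioi (0 : ℝ), Real.exp (-x) * (x + 2 * (α : ℝ) + 4) *
      iteratedDeriv (α + 2) (fun s => s ^ α * f s) x *
      iteratedDeriv (α + 2) (fun s => s ^ α * g s) x

/-- The integral `I₄,j^α(f,g)`. -/
def I4 (α j : ℕ) (f g : ℝ → ℝ) : ℝ :=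
  (1 / ((Nat.factorial (α + 1) : ℝ) * (Nat.factorial (α + 3 + j) : ℝ))) *
    ∫ x in Set.Ioi (0 : ℝ), Real.exp (-x) * x ^ j * (x + qcoef α j) *
      iteratedDeriv (α + 3 + j) (fun s => s ^ (α + 1) * f s) x *
      iteratedDeriv (α + 3 + j) (fun s => s ^ (α + 1) * g s) x

/-- The boundary functional `(S₁ f)(0)`. -/
def S1 (α : ℕ) (f : ℝ → ℝ) : ℝ :=
  ∑ j ∈ Finset.range (α + 3),
    ((-1 : ℝ) ^ j * poch ((α : ℝ) + 3 - (j : ℝ)) (2 * j) * ((α : ℝ) + 2 + (j : ℝ)) /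
      ((Nat.factorial j : ℝ) * (Nat.factorial (j + 2) : ℝ))) * iteratedDeriv (j + 2) f 0

/-- The boundary functional `(S₂ f)(0)`. -/
def S2 (α : ℕ) (f : ℝ → ℝ) : ℝ :=
  ∑ j ∈ Finset.Icc 1 (α + 2),
    ((-1 : ℝ) ^ (j + 1) * poch ((α : ℝ) + 3 - (j : ℝ)) (2 * j) /
      ((Nat.factorial j : ℝ) * (Nat.factorial (j + 1) : ℝ))) * iteratedDeriv (j + 1) f 0

open Polynomial

/-- One step of "derivative of `P·exp`". -/
def Tp (P : ℝ[X]) : ℝ[X] := P + Polynomial.derivative P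

lemma Tp_natDegree_le (P : ℝ[X]) : (Tp P).natDegree ≤ P.natDegree := by
  refine (Polynomial.natDegree_add_le _ _).trans (max_le le_rfl ?_)
  exact (Polynomial.natDegree_derivative_le P).trans (Nat.sub_le _ _)

lemma Tp_iter_natDegree_le (n : ℕ) (P : ℝ[X]) : (Tp^[n] P).natDegree ≤ P.natDegree := by
  induction n generalizing P with
  | zero => simp
  | succ n ih =>
    rw [Function.iterate_succ_apply]
    exact (ih (Tp P)).trans (Tp_natDegree_le P)

lemma deriv_poly_exp (P : ℝ[X]) (x : ℝ) :
    deriv (fun s => P.eval s * Real.exp s) x = (Tp P).eval x * Real.exp x := by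
  have h := ((P.hasDerivAt x).mul (Real.hasDerivAt_exp x)).deriv
  rw [show (fun s => P.eval s * Real.exp s) = (fun x => P.eval x) * Real.exp from rfl, h]; simp [Tp]; ring

lemma iter_poly_exp (n : ℕ) (P : ℝ[X]) :
    iteratedDeriv n (fun s => P.eval s * Real.exp s)
      = fun t => (Tp^[n] P).eval t * Real.exp t := by
  induction n generalizing P with
  | zero => simp
  | succ n ih =>
    rw [iteratedDeriv_succ', Function.iterate_succ_apply]
    rw [show deriv (fun s => P.eval s * Real.exp s) = fun s => (Tp P).eval s * Real.exp s from
      funext (deriv_poly_exp P)]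
    exact ih (Tp P)

lemma iter_poly (n : ℕ) (P : ℝ[X]) :
    iteratedDeriv n (fun s : ℝ => P.eval s)
      = fun t => (Polynomial.derivative^[n] P).eval t := by
  induction n generalizing P with
  | zero => simp
  | succ n ih =>
    rw [iteratedDeriv_succ']
    rw [show deriv (fun s : ℝ => P.eval s) = fun s => P.derivative.eval s from
      funext fun s => Polynomial.deriv P]
    rw [ih, Function.iterate_succ_apply]

lemma iter_zero (g : ℝ → ℝ) (S : ℝ[X]) (m : ℕ) (hg : ∀ t, g t = S.eval t)
    (h : S.natDegree < m) (x : ℝ) : iteratedDeriv m g x = 0 := by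
  rw [show g = fun t => S.eval t from funext hg, iter_poly,
    Polynomial.iterate_derivative_eq_zero h]
  simp

lemma inner_val (k n : ℕ) (t : ℝ) :
    iteratedDeriv n (fun s : ℝ => s ^ k * Real.exp s) t
      = (Tp^[n] ((X : ℝ[X]) ^ k)).eval t * Real.exp t := by
  rw [show (fun s : ℝ => s ^ k * Real.exp s) = fun s => ((X : ℝ[X]) ^ k).eval s * Real.exp s by
    funext s; simp, iter_poly_exp]

lemma deg_aux (R Q : ℝ[X]) (a b m : ℕ) (hR : R.natDegree ≤ a) (hQ : Q.natDegree ≤ b)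
    (h : a + b < m) : (R * Q).natDegree < m :=
  lt_of_le_of_lt (Polynomial.natDegree_mul_le.trans (add_le_add hR hQ)) h

/-- The three higher-order differential expressions annihilate the exponential function. -/
theorem higher_order_expressions_annihilate_exp (α : ℕ) :
    ∀ x : ℝ, 0 < x →
      Lbreve α Real.exp x = 0 ∧ Ltilde α Real.exp x = 0 ∧ Lhat α Real.exp x = 0 := by
  intro x hx
  have hdeg : ∀ k n : ℕ, (Tp^[n] ((X : ℝ[X]) ^ k)).natDegree ≤ k := fun k n => by
    simpa using Tp_iter_natDegree_le n ((X : ℝ[X]) ^ k)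
  refine ⟨?_, ?_, ?_⟩
  · unfold Lbreve
    rw [iter_zero _ (Tp^[α + 2] ((X : ℝ[X]) ^ (α + 1))) (α + 2)
      (fun t => by rw [inner_val, Real.exp_neg]; field_simp)
      (lt_of_le_of_lt (hdeg (α + 1) (α + 2)) (by omega)) x]
    ring
  · unfold Ltilde Eop Fop Gop
    rw [iter_zero _ ((X : ℝ[X]) ^ 2 * Tp^[α + 4] ((X : ℝ[X]) ^ (α + 1))) (α + 4)
      (fun t => by rw [inner_val, Real.exp_neg]; simp; field_simp)
      (deg_aux _ _ 2 (α + 1) _ (by simp) (hdeg _ _) (by omega)) x,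
     iter_zero _ ((X + C (2 * (α : ℝ) + 4)) * Tp^[α + 3] ((X : ℝ[X]) ^ (α + 1))) (α + 3)
      (fun t => by rw [inner_val, Real.exp_neg]; simp; field_simp; ring)
      (deg_aux _ _ 1 (α + 1) _ (le_of_eq (Polynomial.natDegree_X_add_C _)) (hdeg _ _)
        (by omega)) x,
     iter_zero _ ((X + C (2 * (α : ℝ) + 4)) * Tp^[α + 2] ((X : ℝ[X]) ^ α)) (α + 2)
      (fun t => by rw [inner_val, Real.exp_neg]; simp; field_simp; ring)
      (deg_aux _ _ 1 α _ (le_of_eq (Polynomial.natDegree_X_add_C _)) (hdeg _ _)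
        (by omega)) x]
    ring
  · unfold Lhat Hop
    refine Finset.sum_eq_zero fun j hj => ?_
    rw [iter_zero _
      ((X : ℝ[X]) ^ j * (X + C (qcoef α j)) * Tp^[α + 3 + j] ((X : ℝ[X]) ^ (α + 1)))
      (α + 3 + j)
      (fun t => by rw [inner_val, Real.exp_neg]; simp; field_simp)
      (deg_aux _ _ (j + 1) (α + 1) _
        (Polynomial.natDegree_mul_le.trans
          (by rw [Polynomial.natDegree_X_pow, Polynomial.natDegree_X_add_C]))
        (hdeg _ _) (by omega)) x]
    ring


end
end

section
/- Let r, s, t be integers with 0 ≤ r < t ≤ s. Then (d/dx)^s [ e^{−x} · x^r · (d/dx)^s ( x^{s−t} · e^x ) ] = 0 for all real x. -/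
open Real MeasureTheory Finset

noncomputable section

open Polynomial


lemma iterDeriv_poly_mul_exp (P : ℝ[X]) (n : ℕ) :
    iteratedDeriv n (fun v => P.eval v * Real.exp v)
      = fun u => ((fun Q : ℝ[X] => Q + Q.derivative)^[n] P).eval u * Real.exp u := by
  induction n generalizing P with
  | zero => simp
  | succ n ih =>
    rw [iteratedDeriv_succ', Function.iterate_succ_apply]
    have : (deriv fun v => P.eval v * Real.exp v)
        = fun v => (P + P.derivative).eval v * Real.exp v := by
      funext v
      rw [deriv_fun_mul (P.differentiable.differentiableAt) (Real.differentiable_exp v)]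
      simp [Polynomial.deriv, Real.deriv_exp]
      ring
    rw [this, ih]

lemma iterDeriv_poly (P : ℝ[X]) (n : ℕ) (x : ℝ) :
    iteratedDeriv n (fun v => P.eval v) x = (derivative^[n] P).eval x := by
  induction n generalizing P with
  | zero => simp
  | succ n ih =>
    rw [iteratedDeriv_succ', Function.iterate_succ_apply]
    have : (deriv fun v => P.eval v) = fun v => P.derivative.eval v := by
      funext v; exact Polynomial.deriv P
    rw [this, ih]

lemma natDegree_step_le (P : ℝ[X]) : ((fun Q : ℝ[X] => Q + Q.derivative) P).natDegree ≤ P.natDegree := by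
  exact natDegree_add_le_of_degree_le le_rfl ((natDegree_derivative_le P).trans (Nat.sub_le _ _))

/-- For `0 ≤ r < t ≤ s`, `D^s [e^{-x} x^r D^s (x^{s-t} e^x)] = 0`. -/
theorem iteratedDeriv_exp_monomial_vanishes (r s t : ℕ) (hrt : r < t) (hts : t ≤ s) (x : ℝ) :
    iteratedDeriv s (fun u => Real.exp (-u) * u ^ r *
      iteratedDeriv s (fun v => v ^ (s - t) * Real.exp v) u) x = 0 := by
  set m := s - t with hm
  set Q : ℝ[X] := (fun Q : ℝ[X] => Q + Q.derivative)^[s] (X ^ m) with hQ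
  have hQdeg : Q.natDegree ≤ m := by
    rw [hQ]
    have : ∀ k, (((fun Q : ℝ[X] => Q + Q.derivative)^[k] (X ^ m : ℝ[X])).natDegree ≤ m) := by
      intro k
      induction k with
      | zero => simp [natDegree_X_pow]
      | succ k ih =>
        rw [Function.iterate_succ_apply']
        exact le_trans (natDegree_step_le _) ih
    exact this s
  have hinner : (fun u => Real.exp (-u) * u ^ r *
      iteratedDeriv s (fun v => v ^ (s - t) * Real.exp v) u)
      = fun u => ((X ^ r * Q : ℝ[X]).eval u) := by
    funext u
    have h1 : (fun v : ℝ => v ^ (s - t) * Real.exp v) = fun v => (X ^ m : ℝ[X]).eval v * Real.exp v := by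
      funext v; simp [hm]
    rw [h1, iterDeriv_poly_mul_exp]
    simp only [eval_mul, eval_pow, eval_X, ← hQ]
    have : Real.exp (-u) * Real.exp u = 1 := by
      rw [← Real.exp_add]; simp
    calc Real.exp (-u) * u ^ r * (eval u Q * Real.exp u)
        = (Real.exp (-u) * Real.exp u) * (u ^ r * eval u Q) := by ring
      _ = u ^ r * eval u Q := by rw [this]; ring
  rw [hinner, iterDeriv_poly]
  have hdeg : (X ^ r * Q : ℝ[X]).natDegree < s := by
    calc (X ^ r * Q : ℝ[X]).natDegree ≤ r + m := by
          refine le_trans (natDegree_mul_le) ?_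
          simpa [natDegree_X_pow] using hQdeg
      _ < s := by omega
  rw [Polynomial.iterate_derivative_eq_zero hdeg]
  simp

end
end

section
/- Let α > −1 be real and k ≥ 2 an integer. Then ((α+1)(α+3)(k−2)!/(α+3)_{k−2})·U_k^α(x) = [k(α+2)−(α+1)]·L_k^α(x) − ((α+2)(α+3)/(k−1))·Σ_{j=1}^{k−1} j·L_j^α(x) for all real x. -/
open Real MeasureTheory Finset

noncomputable section

lemma poch_zero (a : ℝ) : poch a 0 = 1 := by simp [poch]
lemma poch_succ_right (a : ℝ) (m : ℕ) : poch a (m+1) = poch a m * (a + m) := by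
  simp [poch, ascPochhammer_succ_right]
lemma poch_succ_left (a : ℝ) (m : ℕ) : poch a (m+1) = a * poch (a+1) m := by
  simp [poch, ascPochhammer_succ_left, Polynomial.eval_comp]
lemma poch_pos {a : ℝ} (ha : 0 < a) (m : ℕ) : 0 < poch a m := by
  induction m with
  | zero => simp [poch_zero]
  | succ m ih => rw [poch_succ_right]; exact mul_pos ih (by positivity)

def lterm (a : ℝ) (n : ℕ) (x : ℝ) (k : ℕ) : ℝ :=
  ((-1 : ℝ) ^ k / (Nat.factorial k : ℝ)) *
      (poch (a + (k : ℝ) + 1) (n - k) / (Nat.factorial (n - k) : ℝ)) * x ^ k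

lemma lag_eq (a : ℝ) (n : ℕ) (x : ℝ) :
    lag a n x = ∑ k ∈ Finset.range (n+1), lterm a n x k := rfl

lemma fact_ne (m : ℕ) : ((Nat.factorial m : ℝ)) ≠ 0 := by
  exact_mod_cast m.factorial_ne_zero

lemma lag_eq_sub (a : ℝ) (n : ℕ) (x : ℝ) :
    lag a (n+1) x = lag (a+1) (n+1) x - lag (a+1) n x := by
  simp only [lag_eq]
  rw [Finset.sum_range_succ (lterm a (n+1) x) (n+1),
      Finset.sum_range_succ (lterm (a+1) (n+1) x) (n+1)]
  have htop : lterm a (n+1) x (n+1) = lterm (a+1) (n+1) x (n+1) := by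
    simp [lterm, poch_zero]
  have hsum : ∑ k ∈ Finset.range (n+1), lterm a (n+1) x k
      + ∑ k ∈ Finset.range (n+1), lterm (a+1) n x k
      = ∑ k ∈ Finset.range (n+1), lterm (a+1) (n+1) x k := by
    rw [← Finset.sum_add_distrib]
    apply Finset.sum_congr rfl
    intro k hk
    rw [Finset.mem_range] at hk
    obtain ⟨m, hm⟩ : ∃ m, n - k = m ∧ n = k + m := ⟨n - k, rfl, by omega⟩
    have e1 : n + 1 - k = m + 1 := by omega
    rw [lterm, lterm, lterm, e1, hm.1]
    have e2 : a + 1 + (k:ℝ) + 1 = (a + (k:ℝ) + 1) + 1 := by ring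
    rw [e2, poch_succ_left (a + (k:ℝ) + 1) m, poch_succ_right (a + (k:ℝ) + 1 + 1) m]
    have h1 := fact_ne m
    have h2 := fact_ne k
    push_cast [Nat.factorial_succ]
    field_simp
    ring
  linarith [htop, hsum]
lemma lag_x (a : ℝ) (n : ℕ) (x : ℝ) :
    x * lag (a+1) n x = ((n:ℝ) + a + 1) * lag a n x - ((n:ℝ) + 1) * lag a (n+1) x := by
  simp only [lag_eq]
  rw [Finset.mul_sum, Finset.mul_sum, Finset.mul_sum,
      Finset.sum_range_succ (fun k => x * lterm (a+1) n x k) n,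
      Finset.sum_range_succ' (fun k => ((n:ℝ) + a + 1) * lterm a n x k) n,
      Finset.sum_range_succ (fun k => ((n:ℝ) + 1) * lterm a (n+1) x k) (n+1),
      Finset.sum_range_succ' (fun k => ((n:ℝ) + 1) * lterm a (n+1) x k) n]
  have h0 : ((n:ℝ) + a + 1) * lterm a n x 0 = ((n:ℝ) + 1) * lterm a (n+1) x 0 := by
    rw [lterm, lterm]
    simp only [Nat.sub_zero, Nat.cast_zero, pow_zero, Nat.factorial_zero]
    rw [poch_succ_right]
    have h1 := fact_ne n
    push_cast [Nat.factorial_succ]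
    field_simp
    ring
  have htop : x * lterm (a+1) n x n = -(((n:ℝ) + 1) * lterm a (n+1) x (n+1)) := by
    rw [lterm, lterm]
    simp only [Nat.sub_self, poch_zero, Nat.factorial_zero]
    have h1 := fact_ne n
    push_cast [Nat.factorial_succ, pow_succ]
    field_simp
  have hmid : ∀ k ∈ Finset.range n,
      x * lterm (a+1) n x k
        = ((n:ℝ) + a + 1) * lterm a n x (k+1) - ((n:ℝ) + 1) * lterm a (n+1) x (k+1) := by
    intro k hk
    rw [Finset.mem_range] at hk
    obtain ⟨m, hm, hn⟩ : ∃ m, n - (k+1) = m ∧ n = k + 1 + m := ⟨n - (k+1), rfl, by omega⟩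
    have e1 : n - k = m + 1 := by omega
    have e2 : n + 1 - (k+1) = m + 1 := by omega
    rw [lterm, lterm, lterm, e1, e2, hm]
    have e3 : a + 1 + (k:ℝ) + 1 = a + ((k:ℝ)+1) + 1 := by ring
    rw [e3, poch_succ_right (a + ((k:ℝ)+1) + 1) m,
        poch_succ_right (a + (((k+1 : ℕ)):ℝ) + 1) m]
    have h1 := fact_ne m
    have h2 := fact_ne k
    subst hn
    push_cast [Nat.factorial_succ, pow_succ]
    field_simp
    ring
  rw [Finset.sum_congr rfl hmid]
  rw [Finset.sum_sub_distrib]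
  push_cast
  linarith [h0, htop]
lemma lag_zero' (a : ℝ) (x : ℝ) : lag a 0 x = 1 := by
  simp [lag, poch]

lemma abel_sum (a : ℝ) (x : ℝ) (m : ℕ) :
    ∑ j ∈ Finset.Icc 1 (m+1), (j:ℝ) * lag a j x
      = ((m:ℝ)+1) * lag (a+1) (m+1) x - lag (a+2) m x := by
  induction m with
  | zero =>
      rw [zero_add, Finset.Icc_self, Finset.sum_singleton]
      have h := lag_eq_sub a 0 x
      rw [lag_zero' (a+1) x] at h
      rw [lag_zero' (a+2) x]
      push_cast
      linarith [h]
  | succ m ih =>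
      rw [Finset.sum_Icc_succ_top (by omega : 1 ≤ m + 1 + 1), ih]
      have h1 := lag_eq_sub a (m+1) x
      have h2 := lag_eq_sub (a+1) m x
      have e : a + 1 + 1 = a + 2 := by ring
      rw [e] at h2
      push_cast
      linear_combination ((m:ℝ)+1+1) * h1 - h2

/-- Expansion of `U_k^α` in classical Laguerre polynomials. -/
theorem Upoly_laguerre_expansion (a : ℝ) (ha : -1 < a) (k : ℕ) (hk : 2 ≤ k) (x : ℝ) :
    (a + 1) * (a + 3) * (Nat.factorial (k - 2) : ℝ) / poch (a + 3) (k - 2) *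
        Upoly a k x =
      ((k : ℝ) * (a + 2) - (a + 1)) * lag a k x -
        (a + 2) * (a + 3) / ((k : ℝ) - 1) *
          ∑ j ∈ Finset.Icc 1 (k - 1), (j : ℝ) * lag a j x := by
  obtain ⟨n, rfl⟩ : ∃ n, k = n + 2 := ⟨k - 2, by omega⟩
  have d1 : n + 2 - 2 = n := rfl
  have d2 : n + 2 - 1 = n + 1 := rfl
  have hpoch : (0:ℝ) < poch (a+3) n := poch_pos (by linarith) n
  have ha1 : a + 1 ≠ 0 := by linarith
  have ha3 : a + 3 ≠ 0 := by linarith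
  have hfn := fact_ne n
  have hd : ((n+2:ℕ):ℝ) - 1 ≠ 0 := by push_cast; intro h; nlinarith [Nat.cast_nonneg (α := ℝ) n]
  rw [Upoly, if_neg (by omega)]
  simp only [d1, d2]
  have key : ∀ B : ℝ, (a + 1) * (a + 3) * ((Nat.factorial n : ℝ)) / poch (a + 3) n *
      (poch (a + 3) n / ((a + 1) * (a + 3) * (Nat.factorial n : ℝ)) * B) = B := by
    intro B
    field_simp
  rw [key]
  have h1 := lag_x (a+3) n x
  have h2 := lag_x (a+2) n x
  have h3 := lag_x (a+2) (n+1) x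
  have h4 := lag_x (a+1) (n+1) x
  have h5 := lag_eq_sub (a+1) n x
  have h6 := lag_eq_sub (a+1) (n+1) x
  have h7 := lag_eq_sub a (n+1) x
  have hS := abel_sum a x n
  have e2 : a+1+1 = a+2 := by ring
  have e3 : a+2+1 = a+3 := by ring
  have e4 : a+3+1 = a+4 := by ring
  rw [e4] at h1
  rw [e3] at h2 h3
  rw [e2] at h4 h5 h6
  simp only [show n+1+1 = n+2 from rfl] at h1 h3 h4 h6 h7
  push_cast at h1 h2 h3 h4 h5 h6 h7 hS ⊢
  have hmain : x^2 * lag (a+4) n x - (a+2)*((n:ℝ)+1)*x*lag (a+2) (n+1) x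
        - ((n:ℝ)+1)*((n:ℝ)+2+a+1)*lag a (n+2) x
      = ((n:ℝ)+1)*((((n:ℝ)+2)*(a+2)-(a+1))*lag a (n+2) x)
        - (a+2)*(a+3)*(∑ j ∈ Finset.Icc 1 (n+1), (j:ℝ) * lag a j x) := by
    linear_combination x*h1 + ((n:ℝ)+a+4)*h2 - ((n:ℝ)+1)*h3 - (a+2)*((n:ℝ)+1)*h4
      + ((n:ℝ)+1)*((n:ℝ)+2*a+6)*h5 - ((n:ℝ)+1)*((n:ℝ)+2)*h6
      - ((n:ℝ)+1)*((n:ℝ)+2)*(a+3)*h7 + (a+2)*(a+3)*hS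
  push_cast at hd
  field_simp
  linear_combination hmain

end
end

section
/- Let α be a nonnegative integer and n ≥ 2 an integer. For every real polynomial p of degree at most n there exist real constants c_0, c_1, c_2, …, c_n such that p(x) = c_0 + c_1·x + Σ_{k=2}^{n} c_k·U_k^α(x) for all real x. -/
open Real MeasureTheory Finset

noncomputable section

namespace UPolyAux

open Polynomial

noncomputable def lagP (a : ℝ) (n : ℕ) : Polynomial ℝ :=
  ∑ k ∈ Finset.range (n + 1),
    Polynomial.C (((-1 : ℝ) ^ k / (Nat.factorial k : ℝ)) *
      (poch (a + (k : ℝ) + 1) (n - k) / (Nat.factorial (n - k) : ℝ))) * Polynomial.X ^ k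

lemma lagP_eval (a : ℝ) (n : ℕ) (x : ℝ) : (lagP a n).eval x = lag a n x := by
  simp [lagP, lag, Polynomial.eval_finset_sum]

lemma lagP_degree (a : ℝ) (n : ℕ) : (lagP a n).degree ≤ n := by
  refine (Polynomial.degree_sum_le _ _).trans (Finset.sup_le fun k hk => ?_)
  refine (Polynomial.degree_C_mul_X_pow_le _ _).trans ?_
  exact_mod_cast Nat.lt_succ_iff.mp (Finset.mem_range.mp hk)

lemma degC_mul_le (c : ℝ) (p : Polynomial ℝ) :
    (Polynomial.C c * p).degree ≤ p.degree := by
  refine (Polynomial.degree_mul_le _ _).trans ?_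
  calc (Polynomial.C c).degree + p.degree ≤ 0 + p.degree :=
        add_le_add_left Polynomial.degree_C_le _
    _ = p.degree := zero_add _

lemma lagP_coeff (a : ℝ) (n : ℕ) :
    (lagP a n).coeff n = (-1 : ℝ) ^ n / (Nat.factorial n : ℝ) := by
  simp [lagP, Polynomial.coeff_C_mul, Polynomial.coeff_X_pow, mul_assoc, mul_ite, mul_zero,
    Finset.sum_ite_eq, poch]

noncomputable def UP (a : ℝ) (n : ℕ) : Polynomial ℝ :=
  Polynomial.C (poch (a + 3) (n - 2) / ((a + 1) * (a + 3) * (Nat.factorial (n - 2) : ℝ))) *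
    (Polynomial.C (((n : ℝ) - 1)⁻¹) * (Polynomial.X ^ 2 * lagP (a + 4) (n - 2))
      - Polynomial.C (a + 2) * (Polynomial.X * lagP (a + 2) (n - 1))
      - Polynomial.C ((n : ℝ) + a + 1) * lagP a n)

lemma UP_eval (a : ℝ) (n : ℕ) (hn : 2 ≤ n) (x : ℝ) : (UP a n).eval x = Upoly a n x := by
  simp only [UP, Upoly, if_neg (by omega : ¬ n < 2), Polynomial.eval_mul,
    Polynomial.eval_sub, Polynomial.eval_C, Polynomial.eval_X, Polynomial.eval_pow, lagP_eval]
  ring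

lemma UP_degree (a : ℝ) (n : ℕ) (hn : 2 ≤ n) : (UP a n).degree ≤ n := by
  have h1 : (Polynomial.X ^ 2 * lagP (a + 4) (n - 2) : Polynomial ℝ).degree ≤ n := by
    refine (Polynomial.degree_mul_le _ _).trans ?_
    rw [Polynomial.degree_X_pow]
    calc (2 : WithBot ℕ) + (lagP (a + 4) (n - 2)).degree
        ≤ (2 : WithBot ℕ) + ((n - 2 : ℕ) : WithBot ℕ) := by
          exact add_le_add_right (lagP_degree _ _) _
      _ = ((2 + (n - 2) : ℕ) : WithBot ℕ) := by push_cast; ring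
      _ = (n : WithBot ℕ) := by congr 1; omega
  have h2 : (Polynomial.X * lagP (a + 2) (n - 1) : Polynomial ℝ).degree ≤ n := by
    refine (Polynomial.degree_mul_le _ _).trans ?_
    rw [Polynomial.degree_X]
    calc (1 : WithBot ℕ) + (lagP (a + 2) (n - 1)).degree
        ≤ (1 : WithBot ℕ) + ((n - 1 : ℕ) : WithBot ℕ) := by
          exact add_le_add_right (lagP_degree _ _) _
      _ = ((1 + (n - 1) : ℕ) : WithBot ℕ) := by push_cast; ring
      _ = (n : WithBot ℕ) := by congr 1; omega
  refine (degC_mul_le _ _).trans ?_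
  refine (Polynomial.degree_sub_le _ _).trans (max_le ?_ ?_)
  · refine (Polynomial.degree_sub_le _ _).trans (max_le ?_ ?_)
    · exact (degC_mul_le _ _).trans h1
    · exact (degC_mul_le _ _).trans h2
  · exact (degC_mul_le _ _).trans (lagP_degree _ _)

lemma UP_coeff_ne (α : ℕ) (n : ℕ) (hn : 2 ≤ n) : (UP (α : ℝ) n).coeff n ≠ 0 := by
  obtain ⟨m, rfl⟩ : ∃ m, n = m + 2 := ⟨n - 2, by omega⟩
  set a : ℝ := (α : ℝ)
  have ha : 0 ≤ a := Nat.cast_nonneg α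
  have e1 : (Polynomial.X ^ 2 * lagP (a + 4) (m + 2 - 2) : Polynomial ℝ).coeff (m + 2)
      = (-1 : ℝ) ^ m / (Nat.factorial m : ℝ) := by
    rw [Polynomial.coeff_X_pow_mul]
    simpa using lagP_coeff (a + 4) m
  have e2 : (Polynomial.X * lagP (a + 2) (m + 2 - 1) : Polynomial ℝ).coeff (m + 2)
      = (-1 : ℝ) ^ (m + 1) / (Nat.factorial (m + 1) : ℝ) := by
    rw [show m + 2 = (m + 1) + 1 from rfl, Polynomial.coeff_X_mul]
    simpa using lagP_coeff (a + 2) (m + 1)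
  have e3 := lagP_coeff a (m + 2)
  rw [UP, Polynomial.coeff_C_mul, Polynomial.coeff_sub, Polynomial.coeff_sub,
    Polynomial.coeff_C_mul, Polynomial.coeff_C_mul, Polynomial.coeff_C_mul, e1, e2, e3]
  set M := (m : ℝ) with hM
  set F := (Nat.factorial m : ℝ) with hF
  have hM1 : (0 : ℝ) < M + 1 := by positivity
  have hM2 : (0 : ℝ) < M + 2 := by positivity
  have hF0 : (0 : ℝ) < F := by rw [hF]; positivity
  have f1 : (Nat.factorial (m + 1) : ℝ) = (M + 1) * F := by
    push_cast [Nat.factorial_succ]; ring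
  have f2 : (Nat.factorial (m + 2) : ℝ) = (M + 2) * ((M + 1) * F) := by
    push_cast [Nat.factorial_succ]; ring
  have hcast : ((↑(m + 2) : ℝ)) = M + 2 := by push_cast; ring
  have hp : 0 < poch (a + 3) (m + 2 - 2) := ascPochhammer_pos _ _ (by positivity)
  have hbracket : ((↑(m + 2) : ℝ) - 1)⁻¹ * ((-1 : ℝ) ^ m / F)
      - (a + 2) * ((-1 : ℝ) ^ (m + 1) / (Nat.factorial (m + 1) : ℝ))
      - ((↑(m + 2) : ℝ) + a + 1) * ((-1 : ℝ) ^ (m + 2) / (Nat.factorial (m + 2) : ℝ))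
      = (-1 : ℝ) ^ m * (((M + 1) * (a + 2) + 1) / ((M + 2) * ((M + 1) * F))) := by
    have hne1 : M + 1 ≠ 0 := hM1.ne'
    have hne2 : M + 2 ≠ 0 := hM2.ne'
    have hneF : F ≠ 0 := hF0.ne'
    have hneMF : M * F + F ≠ 0 := by
      have h : M * F + F = (M + 1) * F := by ring
      rw [h]; exact mul_ne_zero hne1 hneF
    have h21 : M + 2 - 1 = M + 1 := by ring
    rw [f1, f2, hcast, pow_succ, pow_succ, h21]
    field_simp
    ring
  rw [hbracket]
  have hs : ((-1 : ℝ) ^ m) ≠ 0 := by positivity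
  have hnum : (0 : ℝ) < (M + 1) * (a + 2) + 1 := by positivity
  have hden : (0 : ℝ) < (M + 2) * ((M + 1) * F) := by positivity
  have hcoef : (0 : ℝ) < poch (a + 3) (m + 2 - 2) /
      ((a + 1) * (a + 3) * (Nat.factorial (m + 2 - 2) : ℝ)) := by
    apply div_pos hp; positivity
  exact mul_ne_zero hcoef.ne' (mul_ne_zero hs (div_pos hnum hden).ne')

lemma key (α : ℕ) : ∀ n : ℕ, ∀ p : Polynomial ℝ, p.degree ≤ n →
    ∃ c : ℕ → ℝ, p = Polynomial.C (c 0) + Polynomial.C (c 1) * Polynomial.X +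
      ∑ k ∈ Finset.Icc 2 n, Polynomial.C (c k) * UP (α : ℝ) k := by
  intro n
  induction n with
  | zero =>
    intro p hp
    refine ⟨fun k => if k = 0 then p.coeff 0 else 0, ?_⟩
    conv_lhs => rw [Polynomial.eq_C_of_degree_le_zero hp]
    simp
  | succ n ih =>
    intro p hp
    by_cases h2 : 2 ≤ n + 1
    · have hu := UP_coeff_ne α (n + 1) h2
      set u := (UP (α : ℝ) (n + 1)).coeff (n + 1) with hudef
      set d := p.coeff (n + 1) with hd
      set q := p - Polynomial.C (d / u) * UP (α : ℝ) (n + 1) with hqdef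
      have hq : q.degree ≤ n := by
        rw [Polynomial.degree_le_iff_coeff_zero]
        intro m hm
        have hm' : n < m := by exact_mod_cast hm
        rcases eq_or_lt_of_le (Nat.succ_le_of_lt hm') with h | h
        · rw [hqdef, Polynomial.coeff_sub, Polynomial.coeff_C_mul, ← h,
            ← hudef, ← hd, div_mul_cancel₀ _ hu, sub_self]
        · rw [hqdef, Polynomial.coeff_sub, Polynomial.coeff_C_mul]
          rw [Polynomial.coeff_eq_zero_of_degree_lt (lt_of_le_of_lt hp (by exact_mod_cast h)),
            Polynomial.coeff_eq_zero_of_degree_lt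
              (lt_of_le_of_lt (UP_degree _ _ h2) (by exact_mod_cast h))]
          ring
      obtain ⟨c, hc⟩ := ih q hq
      refine ⟨Function.update c (n + 1) (d / u), ?_⟩
      rw [Finset.sum_Icc_succ_top h2]
      have hs : ∑ k ∈ Finset.Icc 2 n, Polynomial.C (Function.update c (n + 1) (d / u) k)
          * UP (α : ℝ) k = ∑ k ∈ Finset.Icc 2 n, Polynomial.C (c k) * UP (α : ℝ) k := by
        refine Finset.sum_congr rfl fun k hk => ?_
        have : k ≠ n + 1 := by have := (Finset.mem_Icc.mp hk).2; omega
        rw [Function.update_of_ne this]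
      rw [hs, Function.update_self, Function.update_of_ne (by omega),
        Function.update_of_ne (by omega)]
      have : p = q + Polynomial.C (d / u) * UP (α : ℝ) (n + 1) := by rw [hqdef]; ring
      rw [this, hc]; ring
    · have hn0 : n = 0 := by omega
      subst hn0
      refine ⟨fun k => p.coeff k, ?_⟩
      have hicc : Finset.Icc 2 1 = (∅ : Finset ℕ) := by decide
      rw [hicc, Finset.sum_empty, add_zero]
      conv_lhs => rw [Polynomial.eq_X_add_C_of_degree_le_one hp]
      ring

end UPolyAux

/-- Every polynomial of degree at most `n` is a linear combination of `1, x` and the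
`U_k^α`, `2 ≤ k ≤ n`. -/
theorem polynomial_expansion_in_U (α : ℕ) (n : ℕ) (hn : 2 ≤ n) (p : Polynomial ℝ)
    (hp : p.degree ≤ n) :
    ∃ c : ℕ → ℝ, ∀ x : ℝ,
      Polynomial.eval x p =
        c 0 + c 1 * x + ∑ k ∈ Finset.Icc 2 n, c k * Upoly (α : ℝ) k x := by
  obtain ⟨c, hc⟩ := UPolyAux.key α n p hp
  refine ⟨c, fun x => ?_⟩
  rw [hc]
  simp only [Polynomial.eval_add, Polynomial.eval_mul, Polynomial.eval_C, Polynomial.eval_X,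
    Polynomial.eval_finset_sum]
  congr 1
  refine Finset.sum_congr rfl fun k hk => ?_
  rw [UPolyAux.UP_eval _ _ (Finset.mem_Icc.mp hk).1]


end
end

section
/- Let α be a nonnegative integer, n ≥ 2 an integer and j an integer with 0 ≤ j ≤ α+2. Then for all real x: (i) (d/dx)^{α+3+j} [ x^{α+3} · L_{n−2}^{α+4}(x) ] = (−1)^j · Σ_{r=j}^{n−2} ((r+α+3)!/r!) · L_{r−j}^{j}(x); and (ii) (−1)^{α+j} · e^x · (d/dx)^{α+3+j} [ e^{−x} · x^j · (d/dx)^{α+3+j} ( x^{α+3} · L_{n−2}^{α+4}(x) ) ] = − Σ_{r=j}^{n−2} ((r+α+3)!/(r−j)!) · L_r^{α+3}(x), where sums over an empty index range are 0. -/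
open Real MeasureTheory Finset

noncomputable section

section AuxLag
open Polynomial


def lagP (a : ℝ) (n : ℕ) : Polynomial ℝ :=
  ∑ k ∈ Finset.range (n + 1),
    Polynomial.C ((-1 : ℝ) ^ k / (Nat.factorial k : ℝ) *
      (poch (a + (k : ℝ) + 1) (n - k) / (Nat.factorial (n - k) : ℝ))) * Polynomial.X ^ k

lemma lagP_eval (a : ℝ) (n : ℕ) (x : ℝ) : (lagP a n).eval x = lag a n x := by
  unfold lagP lag
  rw [Polynomial.eval_finset_sum]
  exact Finset.sum_congr rfl fun k _ => by simp [mul_assoc]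

lemma poch_succ_cast (b m : ℕ) :
    poch ((b : ℝ) + 1) m = ((b + m).factorial : ℝ) / (b.factorial : ℝ) := by
  have h2 := Nat.cast_ascFactorial (S := ℝ) (b + 1) m
  push_cast at h2
  rw [poch, ← h2, eq_div_iff (by positivity), ← Nat.cast_mul, mul_comm,
    Nat.factorial_mul_ascFactorial]

lemma iteratedDeriv_polyEval (N : ℕ) (p : Polynomial ℝ) :
    iteratedDeriv N (fun t : ℝ => p.eval t) = fun t : ℝ => (Polynomial.derivative^[N] p).eval t := by
  induction N generalizing p with
  | zero => simp
  | succ N ih =>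
    rw [iteratedDeriv_succ']
    have h : deriv (fun t : ℝ => p.eval t) = fun t : ℝ => (Polynomial.derivative p).eval t := by
      funext t; exact p.deriv
    rw [h, ih, Function.iterate_succ_apply]

def opD : Module.End ℝ (Polynomial ℝ) := Polynomial.derivative - 1

lemma opD_apply (p : Polynomial ℝ) : opD p = Polynomial.derivative p - p := by
  simp [opD, LinearMap.sub_apply]

lemma hasDerivAt_exp_neg_mul (p : Polynomial ℝ) (t : ℝ) :
    HasDerivAt (fun t => Real.exp (-t) * p.eval t) (Real.exp (-t) * (opD p).eval t) t := by
  have h1 : HasDerivAt (fun t : ℝ => Real.exp (-t)) (-Real.exp (-t)) t := by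
    simpa using ((hasDerivAt_id' t).neg).exp
  have h := h1.mul (p.hasDerivAt t)
  refine h.congr_deriv ?_
  rw [opD_apply]
  rw [Polynomial.eval_sub]
  ring

lemma iteratedDeriv_exp_polyEval (N : ℕ) (p : Polynomial ℝ) :
    iteratedDeriv N (fun t => Real.exp (-t) * p.eval t)
      = fun t => Real.exp (-t) * ((opD ^ N) p).eval t := by
  induction N generalizing p with
  | zero => simp
  | succ N ih =>
    rw [iteratedDeriv_succ']
    have h : deriv (fun t => Real.exp (-t) * p.eval t)
        = fun t => Real.exp (-t) * (opD p).eval t := by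
      funext t; exact (hasDerivAt_exp_neg_mul p t).deriv
    rw [h, ih, pow_succ]
    simp [Module.End.mul_apply]

lemma opD_pow_apply (N : ℕ) (p : Polynomial ℝ) :
    (opD ^ N) p = ∑ k ∈ Finset.range (N + 1),
      ((-1 : ℝ) ^ (N - k) * (N.choose k : ℝ)) • Polynomial.derivative^[k] p := by
  have hopD : opD = (Polynomial.derivative : Module.End ℝ (Polynomial ℝ))
      + algebraMap ℝ (Module.End ℝ (Polynomial ℝ)) (-1) := by
    rw [map_neg, map_one, ← sub_eq_add_neg]; rfl
  have hc : Commute (Polynomial.derivative : Module.End ℝ (Polynomial ℝ))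
      (algebraMap ℝ (Module.End ℝ (Polynomial ℝ)) (-1)) := (Algebra.commutes _ _).symm
  have h := hc.add_pow N
  rw [hopD, h]
  rw [LinearMap.sum_apply]
  refine Finset.sum_congr rfl fun k _ => ?_
  rw [Module.End.mul_apply, Module.End.mul_apply, ← map_pow, Module.End.natCast_apply,
    Module.algebraMap_end_apply, _root_.map_smul, map_nsmul, Module.End.pow_apply, ← Nat.cast_smul_eq_nsmul ℝ, smul_smul]

lemma opD_pow_X_pow (N r : ℕ) :
    (opD ^ N) ((Polynomial.X : Polynomial ℝ) ^ r)
      = ∑ k ∈ Finset.range (N + 1),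
        (((-1 : ℝ) ^ (N - k) * (N.choose k : ℝ)) * (r.descFactorial k : ℝ)) •
          (Polynomial.X : Polynomial ℝ) ^ (r - k) := by
  rw [opD_pow_apply]
  refine Finset.sum_congr rfl fun k _ => ?_
  rw [Polynomial.iterate_derivative_X_pow_eq_smul, smul_smul]

lemma cast_descFactorial_eq (a b : ℕ) (h : b ≤ a) :
    (a.descFactorial b : ℝ) = (a.factorial : ℝ) / ((a - b).factorial : ℝ) := by
  rw [eq_div_iff (by positivity), ← Nat.cast_mul, mul_comm, Nat.factorial_mul_descFactorial h]

lemma R1 (β p : ℕ) :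
    (opD ^ p) ((Polynomial.X : Polynomial ℝ) ^ (p + β))
      = (p.factorial : ℝ) • ((Polynomial.X : Polynomial ℝ) ^ β * lagP (β : ℝ) p) := by
  rw [opD_pow_X_pow, lagP, Finset.mul_sum, Finset.smul_sum, ← Finset.sum_range_reflect]
  refine Finset.sum_congr rfl fun i hi => ?_
  have hip : i ≤ p := by simpa using Nat.lt_succ_iff.mp (Finset.mem_range.mp hi)
  have h1 : p + 1 - 1 - i = p - i := by omega
  have h2 : p - (p - i) = i := by omega
  have h3 : p + β - (p - i) = β + i := by omega
  have h4 : (β : ℝ) + (i : ℝ) + 1 = ((β + i : ℕ) : ℝ) + 1 := by push_cast; ring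
  rw [h1, h2, h3, h4, poch_succ_cast, Nat.choose_symm hip,
    cast_descFactorial_eq _ _ (by omega), h3]
  have h7 : β + i + (p - i) = p + β := by omega
  rw [h7, Polynomial.smul_eq_C_mul, Polynomial.smul_eq_C_mul]
  have h8 : β + i ≤ p + β := by omega
  have f1 : (0:ℝ) < (i.factorial : ℝ) := by positivity
  have f2 : (0:ℝ) < ((p-i).factorial : ℝ) := by positivity
  have f3 : (0:ℝ) < ((β+i).factorial : ℝ) := by positivity
  have hA : (-1:ℝ) ^ i * (p.choose i : ℝ) * (((p+β).factorial : ℝ) / ((β+i).factorial : ℝ))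
      = (p.factorial : ℝ) * ((-1:ℝ) ^ i / (i.factorial : ℝ) *
        (((p+β).factorial : ℝ) / ((β+i).factorial : ℝ) / ((p-i).factorial : ℝ))) := by
    rw [Nat.cast_choose ℝ hip]
    field_simp
  rw [hA, Polynomial.C_mul]
  ring

lemma R2 (p c : ℕ) :
    (opD ^ (p + c)) ((Polynomial.X : Polynomial ℝ) ^ p)
      = ((-1 : ℝ) ^ c * (p.factorial : ℝ)) • lagP (c : ℝ) p := by
  rw [opD_pow_X_pow]
  rw [← Finset.sum_subset (Finset.range_subset_range.2 (by omega : p + 1 ≤ p + c + 1))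
    (fun k _ hk => by
      have : p < k := by simpa using hk
      simp [Nat.descFactorial_eq_zero_iff_lt.2 this])]
  rw [lagP, Finset.smul_sum, ← Finset.sum_range_reflect]
  refine Finset.sum_congr rfl fun i hi => ?_
  have hip : i ≤ p := by simpa using Nat.lt_succ_iff.mp (Finset.mem_range.mp hi)
  have h1 : p + 1 - 1 - i = p - i := by omega
  have h2 : p + c - (p - i) = c + i := by omega
  have h3 : p - (p - i) = i := by omega
  have h4 : (c : ℝ) + (i : ℝ) + 1 = ((c + i : ℕ) : ℝ) + 1 := by push_cast; ring
  rw [h1, h2, h3, h4, poch_succ_cast, cast_descFactorial_eq _ _ (by omega), h3]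
  have h5 : c + i + (p - i) = p + c := by omega
  rw [h5, Polynomial.smul_eq_C_mul, Polynomial.smul_eq_C_mul]
  have hch : p - i ≤ p + c := by omega
  have f1 : (0:ℝ) < (i.factorial : ℝ) := by positivity
  have f2 : (0:ℝ) < ((p-i).factorial : ℝ) := by positivity
  have f3 : (0:ℝ) < ((c+i).factorial : ℝ) := by positivity
  have hA : (-1:ℝ) ^ (c + i) * ((p + c).choose (p - i) : ℝ) *
        ((p.factorial : ℝ) / (i.factorial : ℝ))
      = ((-1:ℝ) ^ c * (p.factorial : ℝ)) * ((-1:ℝ) ^ i / (i.factorial : ℝ) *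
        (((p+c).factorial : ℝ) / ((c+i).factorial : ℝ) / ((p-i).factorial : ℝ))) := by
    rw [Nat.cast_choose ℝ hch]
    have e1 : p + c - (p - i) = c + i := by omega
    rw [e1, pow_add]
    field_simp
  rw [hA, Polynomial.C_mul]
  ring

lemma hockey (d k M : ℕ) :
    ∑ r ∈ Finset.Icc k M, ((r + d).choose (k + d) : ℝ)
      = ((M + d + 1).choose (k + d + 1) : ℝ) := by
  norm_cast
  have h := Nat.sum_Icc_choose (M + d) (k + d)
  rw [← h, ← Finset.map_add_right_Icc, Finset.sum_map]
  rfl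

lemma hockey2 (α k M : ℕ) :
    ∑ r ∈ Finset.Icc k M, ((r + α + 3).choose (k + α + 3) : ℝ)
      = ((M + α + 4).choose (k + α + 4) : ℝ) := by
  have h := hockey (α + 3) k M
  have e2 : M + (α + 3) + 1 = M + α + 4 := by omega
  have e3 : k + (α + 3) + 1 = k + α + 4 := by omega
  rw [e2, e3] at h
  rw [← h]
  refine Finset.sum_congr rfl fun r _ => ?_
  congr 2 <;> omega

lemma main_poly (α n j : ℕ) (hn : 2 ≤ n) (hj : j ≤ α + 2) :
    Polynomial.derivative^[α + 3 + j]
        ((Polynomial.X : Polynomial ℝ) ^ (α + 3) * lagP ((α : ℝ) + 4) (n - 2))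
      = ((-1 : ℝ) ^ j) • ∑ r ∈ Finset.Icc j (n - 2),
          (((r + α + 3).factorial : ℝ) / (r.factorial : ℝ)) • lagP (j : ℝ) (r - j) := by
  -- expand F as a sum of monomials
  have hF : (Polynomial.X : Polynomial ℝ) ^ (α + 3) * lagP ((α : ℝ) + 4) (n - 2)
      = ∑ k ∈ Finset.range (n - 2 + 1),
          Polynomial.C ((-1 : ℝ) ^ k / (Nat.factorial k : ℝ) *
            (poch ((α : ℝ) + 4 + (k : ℝ) + 1) (n - 2 - k) / (Nat.factorial (n - 2 - k) : ℝ))) *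
          Polynomial.X ^ (k + α + 3) := by
    rw [lagP, Finset.mul_sum]
    refine Finset.sum_congr rfl fun k _ => ?_
    ring
  rw [hF, Polynomial.iterate_derivative_sum]
  simp only [Polynomial.iterate_derivative_C_mul, Polynomial.iterate_derivative_X_pow_eq_smul]
  -- restrict the sum on the left to `Icc j (n-2)`
  rw [← Finset.sum_subset (show Finset.Icc j (n-2) ⊆ Finset.range (n-2+1) by
      intro k hk; rw [Finset.mem_range]; have := (Finset.mem_Icc.mp hk).2; omega)
    (fun k hk hk2 => by
      have hkj : k < j := by
        rw [Finset.mem_range] at hk; rw [Finset.mem_Icc] at hk2; omega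
      have : (k + α + 3).descFactorial (α + 3 + j) = 0 :=
        Nat.descFactorial_eq_zero_iff_lt.2 (by omega)
      simp [this])]
  -- expand the right side into a double sum and swap
  rw [Finset.smul_sum]
  simp only [lagP, Finset.smul_sum]
  rw [Finset.sum_comm' (s' := fun i => Finset.Icc (j + i) (n - 2))
    (t' := Finset.range (n - 1 - j))
    (fun r i => by
      simp only [Finset.mem_Icc, Finset.mem_range]
      omega)]
  refine Finset.sum_nbij' (fun k => k - j) (fun i => i + j)
    (fun k hk => by
      rw [Finset.mem_Icc] at hk
      show k - j ∈ Finset.range (n - 1 - j)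
      rw [Finset.mem_range]; omega)
    (fun i hi => by
      rw [Finset.mem_range] at hi
      show i + j ∈ Finset.Icc j (n - 2)
      rw [Finset.mem_Icc]; omega)
    (fun k hk => by rw [Finset.mem_Icc] at hk; show k - j + j = k; omega)
    (fun i hi => by show i + j - j = i; omega)
    (fun k hk => ?_)
  rw [Finset.mem_Icc] at hk
  obtain ⟨hjk, hk2⟩ := hk
  rw [show j + (k - j) = k from by omega, show k + α + 3 - (α + 3 + j) = k - j from by omega]
  have hterm : ∀ x ∈ Finset.Icc k (n - 2),
      (-1:ℝ) ^ j • ((((x + α + 3).factorial : ℝ)) / (x.factorial : ℝ)) •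
        (Polynomial.C ((-1:ℝ) ^ (k - j) / ((k - j).factorial : ℝ) *
          (poch ((j : ℝ) + ((k - j : ℕ) : ℝ) + 1) (x - j - (k - j)) /
            ((x - j - (k - j)).factorial : ℝ))) * Polynomial.X ^ (k - j))
      = Polynomial.C ((-1:ℝ) ^ k * (((k + α + 3).factorial : ℝ) /
            (((k - j).factorial : ℝ) * (k.factorial : ℝ))) *
          (((x + α + 3).choose (k + α + 3) : ℕ) : ℝ)) * Polynomial.X ^ (k - j) := by
    intro x hx
    rw [Finset.mem_Icc] at hx
    obtain ⟨hkx, hx2⟩ := hx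
    have hc1 : (j : ℝ) + ((k - j : ℕ) : ℝ) + 1 = ((k : ℕ) : ℝ) + 1 := by
      rw [Nat.cast_sub hjk]; ring
    rw [hc1, show x - j - (k - j) = x - k from by omega, poch_succ_cast,
      show k + (x - k) = x from by omega, smul_smul, Polynomial.smul_eq_C_mul,
      ← mul_assoc, ← Polynomial.C_mul]
    congr 2
    rw [Nat.cast_choose ℝ (show k + α + 3 ≤ x + α + 3 by omega),
      show x + α + 3 - (k + α + 3) = x - k from by omega]
    have hs : (-1:ℝ) ^ j * (-1:ℝ) ^ (k - j) = (-1:ℝ) ^ k := by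
      rw [← pow_add, show j + (k - j) = k from by omega]
    have f1 : (0:ℝ) < ((k - j).factorial : ℝ) := by positivity
    have f2 : (0:ℝ) < (k.factorial : ℝ) := by positivity
    have f3 : (0:ℝ) < (x.factorial : ℝ) := by positivity
    have f4 : (0:ℝ) < ((x - k).factorial : ℝ) := by positivity
    have f5 : (0:ℝ) < ((k + α + 3).factorial : ℝ) := by positivity
    field_simp
    rw [← hs]
  rw [Finset.sum_congr rfl hterm, ← Finset.sum_mul, ← map_sum, ← Finset.mul_sum, hockey2,
    show n - 2 + α + 4 = n + α + 2 from by omega]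
  -- left side
  have hc2 : (α : ℝ) + 4 + (k : ℝ) + 1 = ((α + k + 4 : ℕ) : ℝ) + 1 := by push_cast; ring
  rw [hc2, poch_succ_cast, show α + k + 4 + (n - 2 - k) = n + α + 2 from by omega,
    Polynomial.smul_eq_C_mul, cast_descFactorial_eq _ _ (show α + 3 + j ≤ k + α + 3 by omega),
    show k + α + 3 - (α + 3 + j) = k - j from by omega, ← mul_assoc, ← Polynomial.C_mul]
  congr 1
  rw [Polynomial.C_inj]
  rw [Nat.cast_choose ℝ (show k + α + 4 ≤ n + α + 2 by omega),
    show n + α + 2 - (k + α + 4) = n - 2 - k from by omega]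
  have f1 : (0:ℝ) < ((k - j).factorial : ℝ) := by positivity
  have f2 : (0:ℝ) < (k.factorial : ℝ) := by positivity
  have f3 : (0:ℝ) < ((n - 2 - k).factorial : ℝ) := by positivity
  have f4 : (0:ℝ) < ((k + α + 4).factorial : ℝ) := by positivity
  have f5 : (0:ℝ) < ((k + α + 3).factorial : ℝ) := by positivity
  have f6 : (k + α + 4).factorial = (k + α + 4) * (k + α + 3).factorial := by
    rw [← Nat.factorial_succ]
  field_simp
  ring

end AuxLag

/-- Two iterated-derivative identities for `x^{α+3} L_{n-2}^{α+4}(x)`. -/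
theorem iteratedDeriv_laguerre_identities (α : ℕ) (n : ℕ) (hn : 2 ≤ n) (j : ℕ)
    (hj : j ≤ α + 2) (x : ℝ) :
    iteratedDeriv (α + 3 + j) (fun s => s ^ (α + 3) * lag ((α : ℝ) + 4) (n - 2) s) x =
        (-1 : ℝ) ^ j * ∑ r ∈ Finset.Icc j (n - 2),
          ((Nat.factorial (r + α + 3) : ℝ) / (Nat.factorial r : ℝ)) *
            lag (j : ℝ) (r - j) x ∧
      (-1 : ℝ) ^ (α + j) * Real.exp x *
          iteratedDeriv (α + 3 + j) (fun t => Real.exp (-t) * t ^ j *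
            iteratedDeriv (α + 3 + j)
              (fun s => s ^ (α + 3) * lag ((α : ℝ) + 4) (n - 2) s) t) x =
        -∑ r ∈ Finset.Icc j (n - 2),
          ((Nat.factorial (r + α + 3) : ℝ) / (Nat.factorial (r - j) : ℝ)) *
            lag ((α : ℝ) + 3) r x := by
  have hfun : (fun s : ℝ => s ^ (α + 3) * lag ((α : ℝ) + 4) (n - 2) s)
      = fun s : ℝ => ((Polynomial.X : Polynomial ℝ) ^ (α + 3) *
          lagP ((α : ℝ) + 4) (n - 2)).eval s := by
    funext s
    rw [Polynomial.eval_mul, Polynomial.eval_pow, Polynomial.eval_X, lagP_eval]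
  have key := main_poly α n j hn hj
  constructor
  · rw [hfun, iteratedDeriv_polyEval, key]
    simp only [Polynomial.eval_smul, smul_eq_mul, Polynomial.eval_finset_sum, lagP_eval]
  · have hfun2 : (fun t : ℝ => Real.exp (-t) * t ^ j *
        iteratedDeriv (α + 3 + j) (fun s => s ^ (α + 3) * lag ((α : ℝ) + 4) (n - 2) s) t)
        = fun t : ℝ => Real.exp (-t) * ((Polynomial.X ^ j *
            Polynomial.derivative^[α + 3 + j] ((Polynomial.X : Polynomial ℝ) ^ (α + 3) *
              lagP ((α : ℝ) + 4) (n - 2))).eval t) := by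
      funext t
      rw [hfun, iteratedDeriv_polyEval]
      rw [Polynomial.eval_mul, Polynomial.eval_pow, Polynomial.eval_X]
      ring
    rw [hfun2, iteratedDeriv_exp_polyEval]
    have hG : (opD ^ (α + 3 + j)) (Polynomial.X ^ j *
        Polynomial.derivative^[α + 3 + j] ((Polynomial.X : Polynomial ℝ) ^ (α + 3) *
          lagP ((α : ℝ) + 4) (n - 2)))
        = ∑ r ∈ Finset.Icc j (n - 2),
            ((-1 : ℝ) ^ (j + (α + 3)) *
              (((r + α + 3).factorial : ℝ) / ((r - j).factorial : ℝ))) •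
              lagP (((α + 3 : ℕ)) : ℝ) r := by
      rw [key, mul_smul_comm, Finset.mul_sum, _root_.map_smul, _root_.map_sum, Finset.smul_sum]
      refine Finset.sum_congr rfl fun r hr => ?_
      have hjr : j ≤ r := (Finset.mem_Icc.mp hr).1
      rw [mul_smul_comm, _root_.map_smul]
      have h1 := R1 j (r - j)
      rw [show r - j + j = r from by omega] at h1
      have hne : (((r - j).factorial : ℕ) : ℝ) ≠ 0 := by positivity
      have h2 : (Polynomial.X : Polynomial ℝ) ^ j * lagP (j : ℝ) (r - j)
          = (((r - j).factorial : ℝ))⁻¹ • (opD ^ (r - j)) ((Polynomial.X : Polynomial ℝ) ^ r) := by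
        rw [h1, inv_smul_smul₀ hne]
      rw [h2, _root_.map_smul, ← Module.End.mul_apply, ← pow_add,
        show α + 3 + j + (r - j) = r + (α + 3) from by omega, R2,
        smul_smul, smul_smul, smul_smul]
      congr 1
      rw [pow_add]
      field_simp
      ring
    rw [hG]
    have hcast : (((α + 3 : ℕ)) : ℝ) = (α : ℝ) + 3 := by push_cast; ring
    simp only [Polynomial.eval_finset_sum, Polynomial.eval_smul, smul_eq_mul, hcast, lagP_eval]
    rw [mul_assoc, ← mul_assoc (Real.exp x), ← Real.exp_add,
      show x + -x = 0 from by ring, Real.exp_zero, one_mul, Finset.mul_sum]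
    rw [show -∑ r ∈ Finset.Icc j (n - 2), ((Nat.factorial (r + α + 3) : ℝ) / (Nat.factorial (r - j) : ℝ)) * lag ((α : ℝ) + 3) r x = ∑ r ∈ Finset.Icc j (n - 2), -(((Nat.factorial (r + α + 3) : ℝ) / (Nat.factorial (r - j) : ℝ)) * lag ((α : ℝ) + 3) r x) from by rw [Finset.sum_neg_distrib]]
    apply Finset.sum_congr rfl
    intro r hr
    have hsign : ((-1 : ℝ)) ^ (α + j) * (-1) ^ (j + (α + 3)) = -1 := by
      rw [← pow_add]
      exact Odd.neg_one_pow ⟨α + j + 1, by omega⟩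
    linear_combination ((((r + α + 3).factorial : ℝ) / (((r - j).factorial : ℝ))) *
      lag ((α : ℝ) + 3) r x) * hsign

end
end

section
/- Let q, r, s, t be nonnegative integers with q ≥ r and s ≥ t, and let f : ℝ → ℝ be (q+s)-times continuously differentiable in a neighbourhood of 0. Then (1/q!)·(d/dx)^q [ e^{−x} · x^r · (d/dx)^s ( x^t · f(x) ) ] evaluated at x = 0 equals Σ_{k=0}^{q−r} ((−1)^{q−r−k}/((q−r−k)!·k!)) · ((k+s)!/(k+s−t)!) · f^{(k+s−t)}(0). -/
open Real MeasureTheory Finset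

noncomputable section

lemma my_iter_iter (m k : ℕ) (h : ℝ → ℝ) :
    iteratedDeriv m (iteratedDeriv k h) = iteratedDeriv (m + k) h := by
  induction k generalizing h with
  | zero => simp
  | succ k ih =>
    rw [iteratedDeriv_succ', ih (deriv h), show m + (k+1) = (m+k)+1 by ring,
      iteratedDeriv_succ']

lemma my_contDiffAt_iteratedDeriv {f : ℝ → ℝ} {x : ℝ} {n m i : ℕ}
    (hf : ContDiffAt ℝ n f x) (h : m + i ≤ n) :
    ContDiffAt ℝ m (iteratedDeriv i f) x := by
  rw [iteratedDeriv_eq_equiv_comp]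
  exact ((ContinuousMultilinearMap.piFieldEquiv ℝ (Fin i) ℝ).symm.contDiff.contDiffAt).comp x
    (hf.iteratedFDeriv_right (by exact_mod_cast h))

lemma my_diffAt_iteratedDeriv {f : ℝ → ℝ} {x : ℝ} {n i : ℕ}
    (hf : ContDiffAt ℝ n f x) (h : i < n) :
    DifferentiableAt ℝ (iteratedDeriv i f) x :=
  (my_contDiffAt_iteratedDeriv hf (by omega : 1 + i ≤ n)).differentiableAt (by norm_num)

lemma my_pascal (n : ℕ) (a b : ℕ → ℝ) :
    ∑ i ∈ range (n + 1), (n.choose i : ℝ) * (a (i + 1) * b (n - i) + a i * b (n - i + 1)) =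
      ∑ i ∈ range (n + 2), ((n + 1).choose i : ℝ) * (a i * b (n + 1 - i)) := by
  have T : ∑ i ∈ range (n + 2), ((n + 1).choose i : ℝ) * (a i * b (n + 1 - i))
      = ∑ i ∈ range (n + 1), (((n.choose i : ℝ) + (n.choose (i+1) : ℝ)) * (a (i+1) * b (n - i)))
        + a 0 * b (n + 1) := by
    rw [Finset.sum_range_succ']
    simp only [Nat.choose_zero_right, Nat.cast_one, one_mul]
    congr 1
    refine Finset.sum_congr rfl fun i hi => ?_
    have h1 : n + 1 - (i + 1) = n - i := by omega
    rw [h1, Nat.choose_succ_succ]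
    push_cast; ring
  have L2 : ∑ i ∈ range (n + 1), (n.choose i : ℝ) * (a i * b (n - i + 1))
      = ∑ i ∈ range (n + 1), (n.choose (i+1) : ℝ) * (a (i+1) * b (n - i)) + a 0 * b (n + 1) := by
    have e1 : ∑ i ∈ range (n + 1), (n.choose i : ℝ) * (a i * b (n - i + 1))
        = ∑ i ∈ range (n + 2), (n.choose i : ℝ) * (a i * b (n + 1 - i)) := by
      rw [Finset.sum_range_succ (fun i => (n.choose i : ℝ) * (a i * b (n + 1 - i))) (n+1)]
      simp only [Nat.choose_succ_self, Nat.cast_zero, zero_mul, add_zero]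
      refine Finset.sum_congr rfl fun i hi => ?_
      rw [mem_range] at hi
      rw [show n - i + 1 = n + 1 - i from by omega]
    rw [e1, Finset.sum_range_succ']
    simp only [Nat.choose_zero_right, Nat.cast_one, one_mul]
    congr 1
    refine Finset.sum_congr rfl fun i hi => ?_
    rw [show n + 1 - (i + 1) = n - i from by omega]
  rw [T]
  simp only [mul_add, add_mul, Finset.sum_add_distrib, L2]
  ring

lemma my_leibniz (n : ℕ) : ∀ (f g : ℝ → ℝ) (x : ℝ), ContDiffAt ℝ n f x → ContDiffAt ℝ n g x →
    iteratedDeriv n (fun y => f y * g y) x =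
      ∑ i ∈ range (n + 1), (n.choose i : ℝ) *
        (iteratedDeriv i f x * iteratedDeriv (n - i) g x) := by
  induction n with
  | zero => intro f g x _ _; simp
  | succ n ih =>
    intro f g x hf hg
    have hfe : ∀ᶠ y in nhds x, ContDiffAt ℝ (n+1 : ℕ) f y := hf.eventually (by simp)
    have hge : ∀ᶠ y in nhds x, ContDiffAt ℝ (n+1 : ℕ) g y := hg.eventually (by simp)
    have hev : iteratedDeriv n (fun y => f y * g y) =ᶠ[nhds x]
        fun y => ∑ i ∈ range (n + 1), (n.choose i : ℝ) *
          (iteratedDeriv i f y * iteratedDeriv (n - i) g y) := by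
      filter_upwards [hfe, hge] with y hfy hgy
      exact ih f g y (hfy.of_le (by exact_mod_cast n.le_succ))
        (hgy.of_le (by exact_mod_cast n.le_succ))
    have hdf : ∀ i, i ≤ n → DifferentiableAt ℝ (iteratedDeriv i f) x :=
      fun i hi => my_diffAt_iteratedDeriv hf (by omega)
    have hdg : ∀ i, i ≤ n → DifferentiableAt ℝ (iteratedDeriv i g) x :=
      fun i hi => my_diffAt_iteratedDeriv hg (by omega)
    rw [iteratedDeriv_succ, hev.deriv_eq, deriv_fun_sum (fun i hi => by
      rw [mem_range] at hi
      exact (((hdf i (by omega)).mul (hdg (n - i) (by omega))).const_mul _))]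
    have hstep : ∀ i ∈ range (n + 1),
        deriv (fun y => (n.choose i : ℝ) * (iteratedDeriv i f y * iteratedDeriv (n - i) g y)) x
          = (n.choose i : ℝ) * (iteratedDeriv (i+1) f x * iteratedDeriv (n - i) g x
              + iteratedDeriv i f x * iteratedDeriv (n - i + 1) g x) := by
      intro i hi
      rw [mem_range] at hi
      rw [deriv_const_mul (d := fun y => iteratedDeriv i f y * iteratedDeriv (n - i) g y) _
          ((hdf i (by omega)).mul (hdg (n - i) (by omega))),
        deriv_fun_mul (hdf i (by omega)) (hdg (n - i) (by omega)), ← iteratedDeriv_succ,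
        ← iteratedDeriv_succ]
    rw [Finset.sum_congr rfl hstep, my_pascal n (fun i => iteratedDeriv i f x)
      (fun j => iteratedDeriv j g x)]

lemma my_iteratedDeriv_pow (r : ℕ) : ∀ n, iteratedDeriv n (fun x : ℝ => x ^ r)
    = fun x => (r.descFactorial n : ℝ) * x ^ (r - n) := by
  intro n
  induction n with
  | zero => simp
  | succ n ih =>
    rw [iteratedDeriv_succ, ih]
    funext x
    rw [deriv_const_mul _ (differentiableAt_pow _), deriv_pow_field]
    rw [Nat.descFactorial_succ, show r - n - 1 = r - (n+1) from by omega]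
    push_cast
    ring

lemma my_pow_at_zero (r n : ℕ) : iteratedDeriv n (fun x : ℝ => x ^ r) 0
    = if n = r then (r.factorial : ℝ) else 0 := by
  rw [my_iteratedDeriv_pow]
  simp only []
  rcases lt_trichotomy n r with h | h | h
  · rw [if_neg (by omega), zero_pow (by omega), mul_zero]
  · subst h
    rw [if_pos rfl, Nat.sub_self, pow_zero, mul_one, Nat.descFactorial_self]
  · rw [if_neg (by omega), Nat.descFactorial_eq_zero_iff_lt.mpr h, Nat.cast_zero, zero_mul]

lemma my_expneg (n : ℕ) (x : ℝ) :
    iteratedDeriv n (fun u : ℝ => Real.exp (-u)) x = (-1 : ℝ) ^ n * Real.exp (-x) := by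
  have h : (fun u : ℝ => Real.exp (-u)) = fun u => Real.exp ((-1) * u) := by
    funext u; ring_nf
  rw [h, iteratedDeriv_exp_const_mul]
  norm_num

lemma my_Aval (m r : ℕ) : iteratedDeriv m (fun u : ℝ => Real.exp (-u) * u ^ r) 0
    = if r ≤ m then (-1 : ℝ) ^ (m - r) * (m.choose r) * r.factorial else 0 := by
  have hrw : (fun u : ℝ => Real.exp (-u) * u ^ r) = fun u => u ^ r * Real.exp (-u) := by
    funext u; ring
  rw [hrw, my_leibniz m (fun u : ℝ => u ^ r) (fun u : ℝ => Real.exp (-u)) 0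
    (contDiff_id.pow r).contDiffAt ((Real.contDiff_exp.comp contDiff_neg).contDiffAt)]
  simp only [my_pow_at_zero, my_expneg, neg_zero, Real.exp_zero, mul_one]
  by_cases h : r ≤ m
  · rw [if_pos h, Finset.sum_eq_single_of_mem r (mem_range.mpr (by omega))]
    · rw [if_pos rfl]; ring
    · intro b _ hb
      rw [if_neg hb]; ring
  · rw [if_neg h, Finset.sum_eq_zero]
    intro i hi
    rw [mem_range] at hi
    rw [if_neg (by omega)]; ring

lemma my_Bval {g : ℝ → ℝ} {m t : ℕ} (ht : t ≤ m) (hg : ContDiffAt ℝ m g 0) :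
    iteratedDeriv m (fun v : ℝ => v ^ t * g v) 0
      = (m.choose t : ℝ) * t.factorial * iteratedDeriv (m - t) g 0 := by
  rw [my_leibniz m (fun v : ℝ => v ^ t) g 0 (contDiff_id.pow t).contDiffAt hg]
  simp only [my_pow_at_zero]
  rw [Finset.sum_eq_single_of_mem t (mem_range.mpr (by omega))]
  · rw [if_pos rfl]; ring
  · intro b _ hb
    rw [if_neg hb]; ring

/-- Evaluation at the origin of `(1/q!) D^q [e^{-x} x^r D^s (x^t f(x))]`. -/
theorem iteratedDeriv_eval_at_origin (q r s t : ℕ) (hqr : r ≤ q) (hst : t ≤ s)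
    (f : ℝ → ℝ) (hf : ContDiffAt ℝ ((q + s : ℕ) : ℕ∞) f 0) :
    (1 / (Nat.factorial q : ℝ)) *
        iteratedDeriv q (fun u => Real.exp (-u) * u ^ r *
          iteratedDeriv s (fun v => v ^ t * f v) u) 0 =
      ∑ k ∈ Finset.range (q - r + 1),
        ((-1 : ℝ) ^ (q - r - k) /
            ((Nat.factorial (q - r - k) : ℝ) * (Nat.factorial k : ℝ))) *
          ((Nat.factorial (k + s) : ℝ) / (Nat.factorial (k + s - t) : ℝ)) *
          iteratedDeriv (k + s - t) f 0 := by
  have hf' : ContDiffAt ℝ ((q + s : ℕ)) f 0 := hf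
  have hxt : ContDiffAt ℝ ((q + s : ℕ)) (fun v : ℝ => v ^ t * f v) 0 :=
    ((contDiff_id.pow t).contDiffAt).mul hf'
  have hG : ContDiffAt ℝ (q : ℕ) (iteratedDeriv s (fun v : ℝ => v ^ t * f v)) 0 :=
    my_contDiffAt_iteratedDeriv hxt le_rfl
  have hA : ContDiffAt ℝ (q : ℕ) (fun u : ℝ => Real.exp (-u) * u ^ r) 0 :=
    (((Real.contDiff_exp.comp contDiff_neg)).mul (contDiff_id.pow r)).contDiffAt
  have key : iteratedDeriv q (fun u => Real.exp (-u) * u ^ r *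
        iteratedDeriv s (fun v => v ^ t * f v) u) 0 =
      ∑ i ∈ range (q + 1), (q.choose i : ℝ) *
        (iteratedDeriv i (fun u : ℝ => Real.exp (-u) * u ^ r) 0 *
          iteratedDeriv (q - i) (iteratedDeriv s (fun v : ℝ => v ^ t * f v)) 0) :=
    my_leibniz q _ _ 0 hA hG
  rw [key, Finset.mul_sum]
  have hterm : ∀ i ∈ range (q + 1),
      (1 / (q.factorial : ℝ)) * ((q.choose i : ℝ) *
        (iteratedDeriv i (fun u : ℝ => Real.exp (-u) * u ^ r) 0 *
          iteratedDeriv (q - i) (iteratedDeriv s (fun v : ℝ => v ^ t * f v)) 0))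
      = (1 / (q.factorial : ℝ)) * ((q.choose i : ℝ) *
          ((if r ≤ i then (-1 : ℝ) ^ (i - r) * (i.choose r) * r.factorial else 0) *
            (((q - i + s).choose t : ℝ) * t.factorial * iteratedDeriv (q - i + s - t) f 0))) := by
    intro i hi
    rw [mem_range] at hi
    rw [my_iter_iter, my_Aval, my_Bval (show t ≤ q - i + s by omega) (hf'.of_le (by exact_mod_cast (by omega : q - i + s ≤ q + s)))]
  rw [Finset.sum_congr rfl hterm]
  rw [← Finset.sum_range_reflect]
  rw [← Finset.sum_subset (Finset.range_subset_range.mpr (by omega : q - r + 1 ≤ q + 1))]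
  · refine Finset.sum_congr rfl fun k hk => ?_
    rw [mem_range] at hk
    have hkq : k ≤ q - r := by omega
    rw [show q + 1 - 1 - k = q - k from by omega,
      show q - (q - k) = k from by omega,
      if_pos (by omega : r ≤ q - k),
      show q - k - r = q - r - k from by omega,
      Nat.choose_symm (show k ≤ q by omega),
      Nat.cast_choose ℝ (show k ≤ q by omega),
      Nat.cast_choose ℝ (show r ≤ q - k by omega),
      Nat.cast_choose ℝ (show t ≤ k + s by omega),
      show q - k - r = q - r - k from by omega]
    have n1 : (q.factorial : ℝ) ≠ 0 := Nat.cast_ne_zero.mpr q.factorial_ne_zero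
    have n2 : (k.factorial : ℝ) ≠ 0 := Nat.cast_ne_zero.mpr k.factorial_ne_zero
    have n3 : ((q - k).factorial : ℝ) ≠ 0 := Nat.cast_ne_zero.mpr (q - k).factorial_ne_zero
    have n4 : (r.factorial : ℝ) ≠ 0 := Nat.cast_ne_zero.mpr r.factorial_ne_zero
    have n5 : ((q - r - k).factorial : ℝ) ≠ 0 := Nat.cast_ne_zero.mpr (q - r - k).factorial_ne_zero
    have n6 : ((k + s).factorial : ℝ) ≠ 0 := Nat.cast_ne_zero.mpr (k + s).factorial_ne_zero
    have n7 : (t.factorial : ℝ) ≠ 0 := Nat.cast_ne_zero.mpr t.factorial_ne_zero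
    have n8 : ((k + s - t).factorial : ℝ) ≠ 0 := Nat.cast_ne_zero.mpr (k + s - t).factorial_ne_zero
    have hfact : ((q - k).factorial : ℝ) = (r.factorial : ℝ) * ((q - r - k).factorial : ℝ) * ((q - k).choose r : ℝ) := by
      rw [Nat.cast_choose ℝ (show r ≤ q - k by omega), show q - k - r = q - r - k from by omega]
      field_simp
    field_simp
  · intro k hk hnk
    rw [mem_range] at hk
    rw [mem_range] at hnk
    rw [show q + 1 - 1 - k = q - k from by omega, if_neg (by omega : ¬ r ≤ q - k)]
    ring

end
end

section
/- Let α be a nonnegative integer and let j, k be integers with 0 ≤ k ≤ 2α+4 and max(0, k−α−2) ≤ j ≤ min(α+2, k). Then Σ_{n=max(0,k−j−1)}^{min(α+1,k)} ((−k)_n·(−α−1)_n)/((n−k+j+1)!·n!) = (j+α+2)!/((j+1)!·(j−k+α+2)!). -/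
open Real MeasureTheory Finset

noncomputable section

lemma poch_neg' (m n : ℕ) : poch (-(m:ℝ)) n = (-1)^n * (m.descFactorial n : ℝ) := by
  rw [poch, ascPochhammer_eval_neg_eq_descPochhammer,
    descPochhammer_eval_eq_descFactorial]

lemma vander' (α j k : ℕ) :
    ∑ n ∈ Finset.Icc (k - (j + 1)) (min (α + 1) k),
      (α+1).choose n * (j+1).choose (k-n) = (α+j+2).choose k := by
  have h := Nat.add_choose_eq (α+1) (j+1) k
  rw [Finset.Nat.sum_antidiagonal_eq_sum_range_succ_mk] at h
  have h2 : ∑ n ∈ Finset.range (k+1), (α+1).choose n * (j+1).choose (k-n)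
      = ∑ n ∈ Finset.Icc (k - (j + 1)) (min (α + 1) k),
        (α+1).choose n * (j+1).choose (k-n) := by
    refine (Finset.sum_subset ?_ ?_).symm
    · intro n hn
      simp only [Finset.mem_Icc, Finset.mem_range] at *
      omega
    · intro n hn hn2
      simp only [Finset.mem_Icc, Finset.mem_range, not_and_or, not_le] at hn hn2
      rcases hn2 with h1 | h1
      · have : (j+1).choose (k-n) = 0 := Nat.choose_eq_zero_of_lt (by omega)
        rw [this, mul_zero]
      · have : (α+1).choose n = 0 := Nat.choose_eq_zero_of_lt (by omega)
        rw [this, zero_mul]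
  rw [h2] at h
  rw [← h]
  congr 1
  omega

/-- The Chu-Vandermonde type identity (3.17). -/
theorem chu_vandermonde_identity (α k j : ℕ) (hk : k ≤ 2 * α + 4)
    (hj1 : k - (α + 2) ≤ j) (hj2 : j ≤ min (α + 2) k) :
    ∑ n ∈ Finset.Icc (k - (j + 1)) (min (α + 1) k),
        poch (-(k : ℝ)) n * poch (-(α : ℝ) - 1) n /
          ((Nat.factorial (n + j + 1 - k) : ℝ) * (Nat.factorial n : ℝ)) =
      (Nat.factorial (j + α + 2) : ℝ) /
        ((Nat.factorial (j + 1) : ℝ) * (Nat.factorial (j + α + 2 - k) : ℝ)) := by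
  have hstep : ∀ n ∈ Finset.Icc (k - (j + 1)) (min (α + 1) k),
      poch (-(k : ℝ)) n * poch (-(α : ℝ) - 1) n /
          ((Nat.factorial (n + j + 1 - k) : ℝ) * (Nat.factorial n : ℝ)) =
        (((α+1).choose n * (j+1).choose (k-n) : ℕ) : ℝ) *
          ((Nat.factorial k : ℝ) / (Nat.factorial (j+1) : ℝ)) := by
    intro n hn
    simp only [Finset.mem_Icc, le_min_iff] at hn
    have hnk : n ≤ k := hn.2.2
    have hnα : n ≤ α + 1 := hn.2.1
    have hkn : k - n ≤ j + 1 := by omega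
    have e1 : (-(α:ℝ) - 1) = -(((α+1 : ℕ)):ℝ) := by push_cast; ring
    have hsq : ((-1:ℝ))^n * (-1)^n = 1 := by
      rw [← pow_add, ← two_mul, pow_mul]; norm_num
    rw [e1, poch_neg', poch_neg', mul_mul_mul_comm, hsq, one_mul,
      Nat.descFactorial_eq_factorial_mul_choose, Nat.descFactorial_eq_factorial_mul_choose]
    push_cast
    rw [Nat.cast_choose ℝ hnk, Nat.cast_choose ℝ hnα, Nat.cast_choose ℝ hkn,
      show j + 1 - (k - n) = n + j + 1 - k by omega]
    field_simp
  rw [Finset.sum_congr rfl hstep, ← Finset.sum_mul, ← Nat.cast_sum, vander',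
    Nat.cast_choose ℝ (show k ≤ α + j + 2 by omega),
    show α + j + 2 = j + α + 2 by omega]
  field_simp

end
end
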